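/- arXiv:1605.01227 — 2 statements merged into one kernel-verified Lean document; each statement's English description precedes it below -/
import Mathlib

section
/- Let n ≥ 1 and let σ be a permutation of {1, 2, …, n} such that σ(i) ≤ i + 1 for every i. Then the sign of σ equals (−1)^k, where k is the number of indices i with σ(i) = i + 1. -/
private lemma perm_le_self_eq_one' {n : ℕ} (f : Equiv.Perm (Fin n))
    (h : ∀ i : Fin n, (f i : ℕ) ≤ i) : f = 1 := by
  have key : ∀ m : ℕ, ∀ i : Fin n, (i : ℕ) = m → f i = i := by
    intro m
    induction m using Nat.strong_induction_on with
    | _ m ih =>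
      intro i hi
      rcases lt_or_eq_of_le (h i) with hlt | heq
      · have hfix : f (f i) = f i := ih (f i : ℕ) (by omega) (f i) rfl
        exact f.injective hfix
      · exact Fin.ext heq
  exact Equiv.ext fun i => key (i : ℕ) i rfl

private lemma sign_aux' {n : ℕ} : ∀ k : ℕ, ∀ σ : Equiv.Perm (Fin n),
    (∀ i : Fin n, (σ i : ℕ) ≤ (i : ℕ) + 1) →
    (Finset.univ.filter (fun i : Fin n => (σ i : ℕ) = (i : ℕ) + 1)).card = k →
    Equiv.Perm.sign σ = (-1 : ℤˣ) ^ k := by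
  intro k
  induction k with
  | zero =>
    intro σ h hcard
    have hle : ∀ i : Fin n, (σ i : ℕ) ≤ i := by
      intro i
      have hempty := Finset.card_eq_zero.mp hcard
      have hi : i ∉ Finset.univ.filter (fun i : Fin n => (σ i : ℕ) = (i : ℕ) + 1) := by
        rw [hempty]; exact Finset.notMem_empty i
      simp only [Finset.mem_filter, Finset.mem_univ, true_and] at hi
      have := h i; omega
    rw [perm_le_self_eq_one' σ hle]; simp
  | succ k ih =>
    intro σ h hcard
    have hne : (Finset.univ.filter (fun i : Fin n => (σ i : ℕ) = (i : ℕ) + 1)).Nonempty := by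
      rw [← Finset.card_pos, hcard]; omega
    have hSne : (Finset.univ.filter (fun i : Fin n => σ i ≠ i)).Nonempty := by
      obtain ⟨j, hj⟩ := hne
      simp only [Finset.mem_filter, Finset.mem_univ, true_and] at hj
      refine ⟨j, ?_⟩
      simp only [Finset.mem_filter, Finset.mem_univ, true_and]
      intro hc
      rw [hc] at hj; omega
    set S := Finset.univ.filter (fun i : Fin n => σ i ≠ i) with hS
    set i := S.min' hSne with hidef
    have hi_mem : i ∈ S := S.min'_mem hSne
    have hi_ne : σ i ≠ i := by
      have := hi_mem
      simp only [hS, Finset.mem_filter, Finset.mem_univ, true_and] at this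
      exact this
    have hfix : ∀ j : Fin n, j < i → σ j = j := by
      intro j hj
      by_contra hc
      have hjS : j ∈ S := by
        simp only [hS, Finset.mem_filter, Finset.mem_univ, true_and]; exact hc
      exact absurd (S.min'_le j hjS) (not_le.mpr hj)
    have hσi : (σ i : ℕ) = (i : ℕ) + 1 := by
      have h1 := h i
      have h2 : ¬ ((σ i : ℕ) < (i : ℕ)) := by
        intro hlt
        have hlt' : σ i < i := hlt
        have := hfix (σ i) hlt'
        exact hi_ne (σ.injective this)
      have h3 : (σ i : ℕ) ≠ (i : ℕ) := fun e => hi_ne (Fin.ext e)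
      omega
    have hlt : (i : ℕ) + 1 < n := hσi ▸ (σ i).isLt
    set i' : Fin n := ⟨(i : ℕ) + 1, hlt⟩ with hi'def
    have hσi' : σ i = i' := Fin.ext hσi
    have hii' : i ≠ i' := by
      intro e
      have := congrArg Fin.val e
      simp [hi'def] at this
    -- hypothesis for the new permutation
    have h' : ∀ j : Fin n, ((Equiv.swap i i' * σ) j : ℕ) ≤ (j : ℕ) + 1 := by
      intro j
      simp only [Equiv.Perm.mul_apply]
      by_cases h1 : σ j = i'
      · have hji : j = i := σ.injective (h1.trans hσi'.symm)
        subst hji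
        rw [h1, Equiv.swap_apply_right]
        omega
      by_cases h2 : σ j = i
      · rw [h2, Equiv.swap_apply_left]
        have hji : j ≠ i := fun e => hi_ne (e ▸ h2)
        have hnlt : ¬ j < i := by
          intro hlt'
          have hjj := hfix j hlt'
          exact hji (hjj.symm.trans h2)
        have : (i : ℕ) ≤ (j : ℕ) := by
          have := not_lt.mp hnlt
          exact this
        simp only [hi'def]
        omega
      · rw [Equiv.swap_apply_of_ne_of_ne h2 h1]
        exact h j
    -- filter set of the new permutation
    have hi_memf : i ∈ Finset.univ.filter (fun j : Fin n => (σ j : ℕ) = (j : ℕ) + 1) := by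
      simp only [Finset.mem_filter, Finset.mem_univ, true_and]; exact hσi
    have hfilter : (Finset.univ.filter (fun j : Fin n => ((Equiv.swap i i' * σ) j : ℕ) = (j : ℕ) + 1))
        = (Finset.univ.filter (fun j : Fin n => (σ j : ℕ) = (j : ℕ) + 1)).erase i := by
      ext j
      simp only [Finset.mem_filter, Finset.mem_univ, true_and, Finset.mem_erase]
      simp only [Equiv.Perm.mul_apply]
      by_cases hji : j = i
      · subst hji
        rw [hσi', Equiv.swap_apply_right]
        constructor
        · intro he; omega
        · rintro ⟨hne, _⟩; exact absurd rfl hne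
      · by_cases h1 : σ j = i'
        · exact absurd (σ.injective (h1.trans hσi'.symm)) hji
        by_cases h2 : σ j = i
        · rw [h2, Equiv.swap_apply_left]
          constructor
          · intro he
            simp only [hi'def] at he
            exact absurd (Fin.ext (by omega : (j : ℕ) = (i : ℕ))) hji
          · rintro ⟨-, he⟩
            have hlt' : j < i := by
              have : (j : ℕ) < (i : ℕ) := by omega
              exact this
            have := hfix j hlt'
            exact absurd (this.symm.trans h2) hji
        · rw [Equiv.swap_apply_of_ne_of_ne h2 h1]
          simp [hji]
    have hcard' : (Finset.univ.filter
        (fun j : Fin n => ((Equiv.swap i i' * σ) j : ℕ) = (j : ℕ) + 1)).card = k := by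
      rw [hfilter, Finset.card_erase_of_mem hi_memf, hcard]
      omega
    have hs := ih (Equiv.swap i i' * σ) h' hcard'
    rw [Equiv.Perm.sign_mul, Equiv.Perm.sign_swap hii'] at hs
    have hfinal : Equiv.Perm.sign σ = (-1 : ℤˣ) * ((-1 : ℤˣ) ^ k) := by
      rw [← hs, ← mul_assoc]; simp
    rw [hfinal, pow_succ, mul_comm]

/-- If `σ` is a permutation of `{1, …, n}` (modelled as `Fin n`) with
`σ(i) ≤ i + 1` for every `i`, then the sign of `σ` is `(−1)^k`, where `k` is the
number of indices `i` with `σ(i) = i + 1`. -/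
theorem sign_of_almost_subdiagonal_perm (n : ℕ) (hn : 1 ≤ n) (σ : Equiv.Perm (Fin n))
    (h : ∀ i : Fin n, (σ i : ℕ) ≤ (i : ℕ) + 1) :
    Equiv.Perm.sign σ =
      (-1 : ℤˣ) ^ (Finset.univ.filter (fun i : Fin n => (σ i : ℕ) = (i : ℕ) + 1)).card := by
  exact sign_aux' _ σ h rfl
end

section
/- For every integer n ≥ 1 and every integer x ≥ 0, det( C(x+i+j, j) + δ_{i,j} − δ_{i+1,j} )_{0 ≤ i, j ≤ n−1} = det( C(x+1+i+j, j) + δ_{i,j} )_{0 ≤ i, j ≤ n−1}, as determinants of n × n integer matrices; that is, with a_n(x) := det( C(x+i+j, j) + δ_{i,j} )_{0 ≤ i, j ≤ n−1} and d_n(x) := det( C(x+i+j, j) + δ_{i,j} − δ_{i+1,j} )_{0 ≤ i, j ≤ n−1}, one has d_n(x) = a_n(x+1) for all n > 0. -/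
/-- For `n ≥ 1` and `x ≥ 0`,
`det( C(x+i+j, j) + δ_{i,j} − δ_{i+1,j} )_{0 ≤ i,j ≤ n−1}
  = det( C(x+1+i+j, j) + δ_{i,j} )_{0 ≤ i,j ≤ n−1}`,
i.e. `d_n(x) = a_n(x+1)`. -/
theorem det_dpp_eq_det_andrews (n x : ℕ) (hn : 1 ≤ n) :
    Matrix.det (Matrix.of fun i j : Fin n =>
        (Nat.choose (x + (i : ℕ) + (j : ℕ)) (j : ℕ) : ℤ)
          + (if (i : ℕ) = (j : ℕ) then 1 else 0)
          - (if (i : ℕ) + 1 = (j : ℕ) then 1 else 0))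
    = Matrix.det (Matrix.of fun i j : Fin n =>
        (Nat.choose (x + 1 + (i : ℕ) + (j : ℕ)) (j : ℕ) : ℤ)
          + (if (i : ℕ) = (j : ℕ) then 1 else 0)) := by
  obtain ⟨m, rfl⟩ : ∃ m, n = m + 1 := ⟨n - 1, (Nat.succ_pred_eq_of_pos hn).symm⟩
  set U : Matrix (Fin (m+1)) (Fin (m+1)) ℤ := Matrix.of fun i j =>
    (if (i : ℕ) = (j : ℕ) then (1:ℤ) else 0) - (if (i : ℕ) + 1 = (j : ℕ) then 1 else 0) with hU
  have hfact : (Matrix.of fun i j : Fin (m+1) =>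
        (Nat.choose (x + (i : ℕ) + (j : ℕ)) (j : ℕ) : ℤ)
          + (if (i : ℕ) = (j : ℕ) then 1 else 0)
          - (if (i : ℕ) + 1 = (j : ℕ) then 1 else 0))
      = (Matrix.of fun i j : Fin (m+1) =>
        (Nat.choose (x + 1 + (i : ℕ) + (j : ℕ)) (j : ℕ) : ℤ)
          + (if (i : ℕ) = (j : ℕ) then 1 else 0)) * U := by
    ext i j
    simp only [Matrix.mul_apply, hU, Matrix.of_apply, mul_sub]
    rw [Finset.sum_sub_distrib]
    have h1 : ∀ (f : Fin (m+1) → ℤ),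
        (∑ k : Fin (m+1), f k * (if (k:ℕ) = (j:ℕ) then (1:ℤ) else 0)) = f j := by
      intro f
      rw [Finset.sum_eq_single j]
      · simp
      · intro k _ hk
        rw [if_neg (fun h => hk (Fin.ext h)), mul_zero]
      · intro h; exact absurd (Finset.mem_univ _) h
    rw [h1]
    induction j using Fin.cases with
    | zero =>
        have h2 : (∑ k : Fin (m+1),
            ((Nat.choose (x + 1 + (i : ℕ) + (k : ℕ)) (k : ℕ) : ℤ)
              + (if (i : ℕ) = (k : ℕ) then 1 else 0)) * (if (k:ℕ) + 1 = ((0 : Fin (m+1)):ℕ) then (1:ℤ) else 0)) = 0 := by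
          apply Finset.sum_eq_zero
          intro k _
          simp
        rw [h2]
        simp
    | succ j' =>
        have h2 : (∑ k : Fin (m+1),
            ((Nat.choose (x + 1 + (i : ℕ) + (k : ℕ)) (k : ℕ) : ℤ)
              + (if (i : ℕ) = (k : ℕ) then 1 else 0)) * (if (k:ℕ) + 1 = ((Fin.succ j' : Fin (m+1)):ℕ) then (1:ℤ) else 0))
            = (Nat.choose (x + 1 + (i : ℕ) + (j' : ℕ)) (j' : ℕ) : ℤ)
              + (if (i : ℕ) = (j' : ℕ) then 1 else 0) := by
          rw [Finset.sum_eq_single (Fin.castSucc j')]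
          · simp
          · intro k _ hk
            have hne : ¬ ((k:ℕ) + 1 = ((Fin.succ j' : Fin (m+1)):ℕ)) := by
              simp only [Fin.val_succ]
              intro h
              exact hk (Fin.ext (by simpa using Nat.add_right_cancel h))
            rw [if_neg hne, mul_zero]
          · intro h; exact absurd (Finset.mem_univ _) h
        rw [h2]
        have hnat : (x + 1 + (i:ℕ) + ((Fin.succ j' : Fin (m+1)):ℕ)).choose ((Fin.succ j' : Fin (m+1)):ℕ)
            = (x + (i:ℕ) + ((Fin.succ j' : Fin (m+1)):ℕ)).choose ((Fin.succ j' : Fin (m+1)):ℕ)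
              + (x + 1 + (i:ℕ) + (j':ℕ)).choose (j':ℕ) := by
          simp only [Fin.val_succ]
          rw [show x + 1 + (i:ℕ) + ((j':ℕ)+1) = (x + (i:ℕ) + ((j':ℕ)+1)) + 1 by omega,
            Nat.choose_succ_succ,
            show x + (i:ℕ) + ((j':ℕ)+1) = x + 1 + (i:ℕ) + (j':ℕ) by omega]
          exact Nat.add_comm _ _
        rw [hnat]
        have hdelta : (if (i:ℕ) + 1 = ((Fin.succ j' : Fin (m+1)):ℕ) then (1:ℤ) else 0)
            = (if (i:ℕ) = (j':ℕ) then 1 else 0) := by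
          simp [Fin.val_succ]
        rw [hdelta]
        push_cast
        ring
  rw [hfact, Matrix.det_mul]
  have hUdet : U.det = 1 := by
    rw [Matrix.det_of_upperTriangular]
    · apply Finset.prod_eq_one
      intro i _
      simp [hU]
    · intro i j hij
      have hj : (j:ℕ) < (i:ℕ) := hij
      simp only [hU, Matrix.of_apply]
      rw [if_neg (by omega), if_neg (by omega)]
      ring
  rw [hUdet, mul_one]
end
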